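/- There is a constant C depending only on the dimension d and on C_I with the following property. Let X be a bounded open convex subset of ℝ^d, let I_δ : C(X) → E_δ be an interpolation operator with constant C_I ≥ 1, let U_ε ⊆ ∂X be a boundary ε-sample with associated discretized constraint set M_ε, and let κ ≥ 1. Assume δ ≤ ε/2, ε ≤ diam(X), and 2κδ² ≤ ε². Then for every convex differentiable function f on X whose gradient is κ-Lipschitz there exists h ∈ E_δ ∩ H_{M_ε} with ‖f − h‖_∞ ≤ C κ² diam(X)² δ²/ε²; in particular d_H(B_{C^{1,1}}^κ ∩ H | E_δ ∩ H_{M_ε}) ≤ C κ² diam(X)² δ²/ε². -/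

import Mathlib

/-! Perturb `f` to `f_t = f + t‖· - x₀‖²` with `t = 2κδ²/ε²`, which is `2t`-strongly convex,
and take `h = I_δ f_t`. By (L3), `h` is within `κδ²` of `f_t` on `X`, so it is strongly convex up
to an additive error `2κδ²`; by continuity this persists on `closure X`, which contains every
discrete segment. Distinct points of a discrete segment are at least `ε` apart, so for a constraint
`ℓ_{xyz}` with `z ∉ {x, y}` the strong-convexity gain `t ‖z - x‖ ‖z - y‖ ≥ tε² = 2κδ²` absorbs the
error. Finally `|f - h| ≤ t diam(X)² + κδ²`. -/

open Set NNReal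

noncomputable section

abbrev Esp (d : ℕ) := EuclideanSpace ℝ (Fin d)

/-- The value of the affine form `ℓ_{xyz}` on a function `g`: with `λ = ‖z−y‖/‖x−y‖`,
`ℓ_{xyz}(g) = g(z) − λ g(x) − (1−λ) g(y)`. -/
def ellVal {d : ℕ} (g : Esp d → ℝ) (x y z : Esp d) : ℝ :=
  g z - (‖z - y‖ / ‖x - y‖) * g x - (1 - ‖z - y‖ / ‖x - y‖) * g y

/-- The discrete segment `c_{pq} = {p + εi(q−p)/‖q−p‖ : i ∈ ℕ, 0 ≤ i ≤ ‖q−p‖/ε}`. -/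
def discreteSeg {d : ℕ} (ε : ℝ) (p q : Esp d) : Set (Esp d) :=
  {x | ∃ i : ℕ, (i : ℝ) ≤ ‖q - p‖ / ε ∧ x = p + ((ε * i) / ‖q - p‖) • (q - p)}

/-- `U` is an `ε`-sample of the boundary of `X`: `U ⊆ ∂X` and every point of `∂X` is within
distance `ε` of a point of `U`. -/
def IsBoundarySample {d : ℕ} (X : Set (Esp d)) (ε : ℝ) (U : Set (Esp d)) : Prop :=
  U ⊆ frontier X ∧ ∀ x ∈ frontier X, ∃ u ∈ U, ‖x - u‖ ≤ ε

/-- The data `(x, y, z)` defines a form `ℓ_{xyz}` of the discretized constraint set `M_ε`: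
`x, y, z ∈ c_{pq}` for some distinct `p, q ∈ U` and `z ∈ [x,y]`. -/
def MemMeps {d : ℕ} (ε : ℝ) (U : Set (Esp d)) (x y z : Esp d) : Prop :=
  ∃ p ∈ U, ∃ q ∈ U, p ≠ q ∧ x ∈ discreteSeg ε p q ∧ y ∈ discreteSeg ε p q ∧
    z ∈ discreteSeg ε p q ∧ x ≠ y ∧ z ∈ segment ℝ x y

/-- `g` belongs to `H_{M_ε}`, i.e. `ℓ(g) ≤ 0` for every form `ℓ ∈ M_ε`. -/
def SatisfiesMeps {d : ℕ} (ε : ℝ) (U : Set (Esp d)) (g : Esp d → ℝ) : Prop :=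
  ∀ x y z : Esp d, MemMeps ε U x y z → ellVal g x y z ≤ 0

/-- An interpolation operator `I_δ : C(X) → E_δ` with constant `C_I`: a continuous linear
map onto a finite-dimensional subspace `E_δ` of `C(X)` containing the affine functions,
restricting to the identity on `E_δ`, and satisfying (L1), (L2), (L3). -/
structure InterpOp (d : ℕ) (X : Set (Esp d)) (δ CI : ℝ) where
  /-- the finite-dimensional subspace `E_δ ⊆ C(X)` -/
  E : Submodule ℝ (Esp d → ℝ)
  findim : FiniteDimensional ℝ E
  contE : ∀ f ∈ E, ContinuousOn f (closure X)
  /-- the (linear) interpolation operator -/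
  I : (Esp d → ℝ) →ₗ[ℝ] (Esp d → ℝ)
  mem_E : ∀ f, I f ∈ E
  /-- continuity (boundedness) of `I` with respect to the sup norm on `X` -/
  bounded : ∃ B : ℝ, ∀ (f : Esp d → ℝ) (r : ℝ), 0 ≤ r → (∀ x ∈ X, |f x| ≤ r) →
    ∀ x ∈ X, |I f x| ≤ B * r
  /-- `I` restricts to the identity on `E_δ` -/
  id_on_E : ∀ f ∈ E, I f = f
  /-- `E_δ` contains the affine functions -/
  affine_mem : ∀ (v : Esp d) (c : ℝ), (fun x => (inner ℝ v x : ℝ) + c) ∈ E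
  /-- (L1): `Lip(I_δ f) ≤ C_I Lip(f)` -/
  lip1 : ∀ (f : Esp d → ℝ) (L : ℝ≥0), LipschitzOnWith L f X →
    LipschitzOnWith (Real.toNNReal CI * L) (I f) X
  /-- (L2): `‖f − I_δ f‖_∞ ≤ δ Lip(f)` -/
  lip2 : ∀ (f : Esp d → ℝ) (L : ℝ≥0), LipschitzOnWith L f X →
    ∀ x ∈ X, |f x - I f x| ≤ δ * L
  /-- (L3): `‖f − I_δ f‖_∞ ≤ (δ²/2) Lip(∇f)` for `f` with Lipschitz gradient -/
  lip3 : ∀ (f : Esp d → ℝ) (f' : Esp d → Esp d) (L : ℝ≥0),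
    (∀ x ∈ X, HasGradientAt f (f' x) x) → LipschitzOnWith L f' X →
    ∀ x ∈ X, |f x - I f x| ≤ δ ^ 2 / 2 * L

section ApproxConvexity

variable {E : Type*} [NormedAddCommGroup E] [NormedSpace ℝ E]

def ApproxUniformConvexOn (s : Set E) (φ : ℝ → ℝ) (η : ℝ) (h : E → ℝ) : Prop :=
  ∀ ⦃x⦄, x ∈ s → ∀ ⦃y⦄, y ∈ s → ∀ ⦃a b : ℝ⦄, 0 ≤ a → 0 ≤ b → a + b = 1 →
    h (a • x + b • y) ≤ a * h x + b * h y - a * b * φ ‖x - y‖ + η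

variable {s : Set E} {φ : ℝ → ℝ} {η : ℝ} {g h : E → ℝ}

lemma UniformConvexOn.approxUniformConvexOn_of_abs_sub_le (hg : UniformConvexOn s φ g)
    (hgh : ∀ x ∈ s, |g x - h x| ≤ η) : ApproxUniformConvexOn s φ (2 * η) h := by
  intro x hx y hy a b ha hb hab
  have hconv := hg.2 hx hy ha hb hab
  have hx' := mul_le_mul_of_nonneg_left (abs_le.1 (hgh x hx)).2 ha
  have hy' := mul_le_mul_of_nonneg_left (abs_le.1 (hgh y hy)).2 hb
  have hxy := (abs_le.1 (hgh _ (hg.1 hx hy ha hb hab))).1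
  have hη : a * η + b * η = η := by rw [← add_mul, hab, one_mul]
  simp only [smul_eq_mul] at hconv
  linarith

lemma ApproxUniformConvexOn.closure (hs : Convex ℝ s) (hh : ContinuousOn h (_root_.closure s))
    (hφ : Continuous φ) (happrox : ApproxUniformConvexOn s φ η h) :
    ApproxUniformConvexOn (_root_.closure s) φ η h := by
  intro x hx y hy a b ha hb hab
  have hfst : ContinuousOn (fun p : E × E => h p.1) (_root_.closure s ×ˢ _root_.closure s) :=
    hh.comp continuousOn_fst fun p hp => hp.1
  have hsnd : ContinuousOn (fun p : E × E => h p.2) (_root_.closure s ×ˢ _root_.closure s) :=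
    hh.comp continuousOn_snd fun p hp => hp.2
  refine le_on_closure (s := s ×ˢ s) (f := fun p => h (a • p.1 + b • p.2))
    (g := fun p => a * h p.1 + b * h p.2 - a * b * φ ‖p.1 - p.2‖ + η)
    (fun p hp => happrox hp.1 hp.2 ha hb hab) ?_ ?_ (x := (x, y))
    (by rw [closure_prod_eq]; exact ⟨hx, hy⟩)
    <;> rw [closure_prod_eq]
  · exact hh.comp (by fun_prop) fun p hp => hs.closure hp.1 hp.2 ha hb hab
  · exact (((continuousOn_const.mul hfst).add (continuousOn_const.mul hsnd)).sub
      (continuousOn_const.mul (hφ.comp (by fun_prop)).continuousOn)).add continuousOn_const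

end ApproxConvexity

section Segments

variable {E : Type*} [NormedAddCommGroup E] [NormedSpace ℝ E]

lemma norm_smul_add_one_sub_smul_sub_right (x y : E) {a : ℝ} (ha : 0 ≤ a) :
    ‖a • x + (1 - a) • y - y‖ = a * ‖x - y‖ := by
  rw [show a • x + (1 - a) • y - y = a • (x - y) by module, norm_smul, Real.norm_of_nonneg ha]

lemma norm_smul_add_one_sub_smul_sub_left (x y : E) {a : ℝ} (ha : a ≤ 1) :
    ‖a • x + (1 - a) • y - x‖ = (1 - a) * ‖x - y‖ := by
  rw [show a • x + (1 - a) • y - x = (1 - a) • (y - x) by module, norm_smul,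
    Real.norm_of_nonneg (sub_nonneg.2 ha), norm_sub_rev]

end Segments

section DiscreteSegments

variable {d : ℕ}

lemma ellVal_smul_add_one_sub_smul (g : Esp d → ℝ) {x y : Esp d} (hxy : x ≠ y) {a : ℝ}
    (ha : 0 ≤ a) :
    ellVal g x y (a • x + (1 - a) • y) = g (a • x + (1 - a) • y) - a * g x - (1 - a) * g y := by
  have hxy' : ‖x - y‖ ≠ 0 := norm_ne_zero_iff.2 (sub_ne_zero.2 hxy)
  rw [ellVal, norm_smul_add_one_sub_smul_sub_right x y ha, mul_div_cancel_right₀ _ hxy']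

lemma discreteSeg_subset_segment {ε : ℝ} (hε : 0 < ε) (p q : Esp d) :
    discreteSeg ε p q ⊆ segment ℝ p q := by
  rintro _ ⟨i, hi, rfl⟩
  rw [segment_eq_image']
  refine ⟨ε * i / ‖q - p‖, ⟨by positivity, div_le_one_of_le₀ ?_ (norm_nonneg _)⟩, rfl⟩
  rwa [le_div_iff₀' hε] at hi

lemma le_norm_sub_of_mem_discreteSeg {ε : ℝ} (hε : 0 < ε) {p q x y : Esp d} (hpq : p ≠ q)
    (hx : x ∈ discreteSeg ε p q) (hy : y ∈ discreteSeg ε p q) (hxy : x ≠ y) :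
    ε ≤ ‖x - y‖ := by
  obtain ⟨i, -, rfl⟩ := hx
  obtain ⟨j, -, rfl⟩ := hy
  have hqp : ‖q - p‖ ≠ 0 := norm_ne_zero_iff.2 (sub_ne_zero.2 hpq.symm)
  have hij : (1 : ℝ) ≤ |(i : ℝ) - j| := by
    have : (i : ℤ) - j ≠ 0 := sub_ne_zero.2 fun h => hxy (by rw [Int.natCast_inj.1 h])
    exact_mod_cast Int.one_le_abs this
  calc ε ≤ ε * |(i : ℝ) - j| := le_mul_of_one_le_right hε.le hij
    _ = _ := by
      rw [add_sub_add_left_eq_sub, ← sub_smul, norm_smul, Real.norm_eq_abs, div_sub_div_same,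
        abs_div, abs_norm, div_mul_cancel₀ _ hqp, ← mul_sub, abs_mul, abs_of_pos hε]

end DiscreteSegments

section Perturbation

variable {F : Type*} [NormedAddCommGroup F] [InnerProductSpace ℝ F] {s : Set F}

lemma ConvexOn.strongConvexOn_add_mul_norm_sub_sq {f : F → ℝ} (hf : ConvexOn ℝ s f) (t : ℝ)
    (x₀ : F) : StrongConvexOn s (2 * t) fun x => f x + t * ‖x - x₀‖ ^ 2 := by
  rw [strongConvexOn_iff_convex]
  have hfun : (fun x => f x + t * ‖x - x₀‖ ^ 2 - 2 * t / 2 * ‖x‖ ^ 2)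
      = fun x => f x + (-(2 * t) • innerSL ℝ x₀).toLinearMap x + t * ‖x₀‖ ^ 2 := by
    funext x
    simp only [norm_sub_sq_real, ContinuousLinearMap.toLinearMap_smul, LinearMap.smul_apply,
      ContinuousLinearMap.coe_coe, innerSL_apply_apply, real_inner_comm x₀, smul_eq_mul]
    ring
  rw [hfun]
  exact (hf.add (LinearMap.convexOn _ hf.1)).add_const _

lemma HasGradientAt.add_mul_norm_sub_sq [CompleteSpace F] {f : F → ℝ} {f'x x : F}
    (hf : HasGradientAt f f'x x) (t : ℝ) (x₀ : F) :
    HasGradientAt (fun y => f y + t * ‖y - x₀‖ ^ 2) (f'x + (2 * t) • (x - x₀)) x := by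
  rw [hasGradientAt_iff_hasFDerivAt] at hf ⊢
  refine (hf.add ((((hasFDerivAt_id x).sub_const x₀).norm_sq).const_mul t)).congr_fderiv ?_
  ext v
  simp
  ring

lemma LipschitzOnWith.add_smul_sub {f' : F → F} {K : ℝ≥0} (hf' : LipschitzOnWith K f' s)
    {c : ℝ} (hc : 0 ≤ c) (x₀ : F) :
    LipschitzOnWith (K + c.toNNReal) (fun y => f' y + c • (y - x₀)) s := by
  have hlin : LipschitzWith c.toNNReal fun y : F => c • (y - x₀) :=
    LipschitzWith.of_dist_le_mul fun u v => by
      rw [dist_smul₀, dist_sub_right, Real.coe_toNNReal _ hc, Real.norm_of_nonneg hc]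
  exact hf'.add hlin.lipschitzOnWith

end Perturbation

lemma InterpOp.abs_add_mul_norm_sub_sq_sub_le {d : ℕ} {X : Set (Esp d)} {δ CI : ℝ}
    (op : InterpOp d X δ CI) {f : Esp d → ℝ} {f' : Esp d → Esp d}
    (hgrad : ∀ x ∈ X, HasGradientAt f (f' x) x) {κ : ℝ} (hlip : LipschitzOnWith κ.toNNReal f' X)
    (hκ : 0 ≤ κ) {t : ℝ} (ht : 0 ≤ t) (x₀ : Esp d) {x : Esp d} (hx : x ∈ X) :
    |f x + t * ‖x - x₀‖ ^ 2 - op.I (fun y => f y + t * ‖y - x₀‖ ^ 2) x|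
      ≤ δ ^ 2 / 2 * (κ + 2 * t) := by
  have h := op.lip3 _ _ _ (fun y hy => (hgrad y hy).add_mul_norm_sub_sq t x₀)
    (hlip.add_smul_sub (by positivity : 0 ≤ 2 * t) x₀) x hx
  rwa [NNReal.coe_add, Real.coe_toNNReal _ hκ, Real.coe_toNNReal _ (by positivity)] at h

lemma satisfiesMeps_of_approxUniformConvexOn {d : ℕ} {X : Set (Esp d)} (hX : Convex ℝ X) {ε : ℝ}
    (hε : 0 < ε) {U : Set (Esp d)} (hU : U ⊆ frontier X) {h : Esp d → ℝ}
    (hh : ContinuousOn h (closure X)) {m η : ℝ} (hm : 0 ≤ m) (hη : η ≤ m / 2 * ε ^ 2)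
    (happrox : ApproxUniformConvexOn X (fun r => m / 2 * r ^ 2) η h) : SatisfiesMeps ε U h := by
  have hcl := happrox.closure hX hh (by fun_prop)
  rintro x y z ⟨p, hp, q, hq, hpq, hx, hy, hz, hxy, a, b, ha, hb, hab, rfl⟩
  obtain rfl : b = 1 - a := by linarith
  rw [ellVal_smul_add_one_sub_smul h hxy ha]
  rcases ha.eq_or_lt with rfl | ha
  · simp
  rcases hb.eq_or_lt with hb | hb
  · obtain rfl : a = 1 := by linarith
    simp
  have hxy' : 0 < ‖x - y‖ := norm_pos_iff.2 (sub_ne_zero.2 hxy)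
  have hzy := norm_smul_add_one_sub_smul_sub_right x y ha.le
  have hzx := norm_smul_add_one_sub_smul_sub_left x y (a := a) (by linarith)
  have hεy : ε ≤ a * ‖x - y‖ := hzy ▸ le_norm_sub_of_mem_discreteSeg hε hpq hz hy
    (sub_ne_zero.1 (norm_ne_zero_iff.1 (by rw [hzy]; positivity)))
  have hεx : ε ≤ (1 - a) * ‖x - y‖ := hzx ▸ le_norm_sub_of_mem_discreteSeg hε hpq hz hx
    (sub_ne_zero.1 (norm_ne_zero_iff.1 (by rw [hzx]; positivity)))
  have hseg : segment ℝ p q ⊆ closure X := hX.closure.segment_subset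
    (frontier_subset_closure (hU hp)) (frontier_subset_closure (hU hq))
  have hconv := hcl (hseg (discreteSeg_subset_segment hε p q hx))
    (hseg (discreteSeg_subset_segment hε p q hy)) ha.le hb.le (by ring)
  have hsep : ε ^ 2 ≤ a * (1 - a) * ‖x - y‖ ^ 2 := by
    nlinarith [mul_le_mul hεy hεx hε.le (by positivity)]
  nlinarith [mul_le_mul_of_nonneg_left hsep (by positivity : 0 ≤ m / 2)]

lemma perturbation_bound_le {κ δ ε D : ℝ} (hκ : 1 ≤ κ) (hε : 0 < ε) (hεD : ε ≤ D) :
    2 * κ * δ ^ 2 / ε ^ 2 * D ^ 2 + κ * δ ^ 2 ≤ 3 * κ ^ 2 * D ^ 2 * δ ^ 2 / ε ^ 2 := by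
  rw [div_mul_eq_mul_div, div_add' _ _ _ (by positivity),
    div_le_div_iff_of_pos_right (by positivity)]
  have hD : ε ^ 2 ≤ D ^ 2 := pow_le_pow_left₀ hε.le hεD 2
  nlinarith [mul_le_mul_of_nonneg_left hD (by positivity : 0 ≤ κ * δ ^ 2),
    mul_le_mul_of_nonneg_right hκ (by positivity : 0 ≤ κ * D ^ 2 * δ ^ 2)]

theorem stmt3_general (d : ℕ) (CI : ℝ) : ∃ C : ℝ, 0 < C ∧
    ∀ (X : Set (Esp d)), Convex ℝ X → IsOpen X → Bornology.IsBounded X →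
    ∀ δ ε κ : ℝ, 0 < δ → 0 < ε → 1 ≤ κ →
    ∀ op : InterpOp d X δ CI, ∀ U : Set (Esp d), IsBoundarySample X ε U →
    δ ≤ ε / 2 → ε ≤ Metric.diam X → 2 * κ * δ ^ 2 ≤ ε ^ 2 →
    ∀ (f : Esp d → ℝ) (f' : Esp d → Esp d), ConvexOn ℝ X f →
      (∀ x ∈ X, HasGradientAt f (f' x) x) →
      LipschitzOnWith (Real.toNNReal κ) f' X →
    ∃ h : Esp d → ℝ, h ∈ op.E ∧ SatisfiesMeps ε U h ∧
      ∀ x ∈ X, |f x - h x| ≤ C * κ ^ 2 * Metric.diam X ^ 2 * δ ^ 2 / ε ^ 2 := by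
  refine ⟨3, by norm_num, ?_⟩
  intro X hX _ hXbd δ ε κ hδ hε hκ op U hU hδε hεD _ f f' hf hgrad hlip
  obtain ⟨x₀, hx₀⟩ : X.Nonempty :=
    nonempty_iff_ne_empty.2 fun hX => by rw [hX, Metric.diam_empty] at hεD; linarith
  set t := 2 * κ * δ ^ 2 / ε ^ 2
  have ht : 0 ≤ t := by positivity
  have htε : t * ε ^ 2 = 2 * κ * δ ^ 2 := div_mul_cancel₀ _ (by positivity)
  have htκ : 2 * t ≤ κ := by
    have hδε' : 4 * δ ^ 2 ≤ ε ^ 2 := by nlinarith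
    refine le_of_mul_le_mul_right ?_ (by positivity : 0 < ε ^ 2)
    nlinarith [mul_le_mul_of_nonneg_left hδε' (by linarith : 0 ≤ κ)]
  set g := fun y => f y + t * ‖y - x₀‖ ^ 2
  have herr : ∀ x ∈ X, |g x - op.I g x| ≤ κ * δ ^ 2 := fun x hx =>
    (op.abs_add_mul_norm_sub_sq_sub_le hgrad hlip (by linarith) ht x₀ hx).trans (by nlinarith)
  refine ⟨op.I g, op.mem_E g, ?_, fun x hx => ?_⟩
  · exact satisfiesMeps_of_approxUniformConvexOn hX hε hU.1 (op.contE _ (op.mem_E g))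
      (by positivity) (by linarith)
      ((hf.strongConvexOn_add_mul_norm_sub_sq t x₀).approxUniformConvexOn_of_abs_sub_le herr)
  · have hxD : ‖x - x₀‖ ≤ Metric.diam X :=
      dist_eq_norm x x₀ ▸ Metric.dist_le_diam_of_mem hXbd hx hx₀
    calc |f x - op.I g x| ≤ |f x - g x| + |g x - op.I g x| := abs_sub_le _ _ _
      _ ≤ t * Metric.diam X ^ 2 + κ * δ ^ 2 := by
        gcongr
        · simp [g, abs_of_nonneg, ht]
          gcongr
        · exact herr x hx
      _ ≤ 3 * κ ^ 2 * Metric.diam X ^ 2 * δ ^ 2 / ε ^ 2 := perturbation_bound_le hκ hε hεD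

/-- There is a constant `C = C(d, C_I)` such that: for every bounded open
convex `X ⊆ ℝ^d`, interpolation operator `I_δ : C(X) → E_δ` with constant `C_I ≥ 1`,
boundary `ε`-sample `U_ε ⊆ ∂X` with constraint set `M_ε`, and `κ ≥ 1`, if `δ ≤ ε/2`,
`ε ≤ diam(X)` and `2κδ² ≤ ε²`, then for every convex differentiable `f` on `X` with
`κ`-Lipschitz gradient there is `h ∈ E_δ ∩ H_{M_ε}` with
`‖f − h‖_∞ ≤ C κ² diam(X)² δ²/ε²`; in particular
`d_H(B_{C^{1,1}}^κ ∩ H | E_δ ∩ H_{M_ε}) ≤ C κ² diam(X)² δ²/ε²`. -/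
theorem stmt3 (d : ℕ) (CI : ℝ) (hCI : 1 ≤ CI) : ∃ C : ℝ, 0 < C ∧
    ∀ (X : Set (Esp d)), Convex ℝ X → IsOpen X → Bornology.IsBounded X →
    ∀ δ ε κ : ℝ, 0 < δ → 0 < ε → 1 ≤ κ →
    ∀ op : InterpOp d X δ CI, ∀ U : Set (Esp d), IsBoundarySample X ε U →
    δ ≤ ε / 2 → ε ≤ Metric.diam X → 2 * κ * δ ^ 2 ≤ ε ^ 2 →
    ∀ (f : Esp d → ℝ) (f' : Esp d → Esp d), ConvexOn ℝ X f →
      (∀ x ∈ X, HasGradientAt f (f' x) x) →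
      LipschitzOnWith (Real.toNNReal κ) f' X →
    ∃ h : Esp d → ℝ, h ∈ op.E ∧ SatisfiesMeps ε U h ∧
      ∀ x ∈ X, |f x - h x| ≤ C * κ ^ 2 * Metric.diam X ^ 2 * δ ^ 2 / ε ^ 2 :=
  stmt3_general d CI
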